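/- Let α be irrational in (0,1), N ≥ 2, and u_2, u_N as above (labels of the smallest and largest fractional parts among {kα}, 1 ≤ k ≤ N-1). If N = u_2 + u_N, then the points {0}, {α}, ..., {(N-1)α}, 1 partition [0,1] into intervals with exactly two distinct lengths. -/
import Mathlib


open Set

/-- The partition points `{0·α}, {1·α}, …, {(N-1)·α}` together with `1`. -/
noncomputable def cfPoints (α : ℝ) (N : ℕ) : Set ℝ :=
  insert 1 ((fun k : ℕ => Int.fract (k * α)) '' Set.Iio N)

/-- The set of gap lengths between consecutive points of `cfPoints α N`. -/
noncomputable def gaps (α : ℝ) (N : ℕ) : Set ℝ :=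
  {d | ∃ x ∈ cfPoints α N, ∃ y ∈ cfPoints α N,
    x < y ∧ (∀ z ∈ cfPoints α N, z ≤ x ∨ y ≤ z) ∧ d = y - x}

private lemma fract_sub_fract' (a b : ℝ) :
    Int.fract (a - b) = Int.fract (Int.fract a - Int.fract b) := by
  have h : a - b = (Int.fract a - Int.fract b) + ((⌊a⌋ - ⌊b⌋ : ℤ) : ℝ) := by
    simp only [Int.fract]; push_cast; ring
  rw [h, Int.fract_add_intCast]

private lemma fract_add_fract' (a b : ℝ) :
    Int.fract (a + b) = Int.fract (Int.fract a + Int.fract b) := by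
  have h : a + b = (Int.fract a + Int.fract b) + ((⌊a⌋ + ⌊b⌋ : ℤ) : ℝ) := by
    simp only [Int.fract]; push_cast; ring
  rw [h, Int.fract_add_intCast]

private lemma fract_big_aux (t : ℝ) (h0 : 1 ≤ t) (h1 : t < 2) :
    Int.fract t = t - 1 := by
  have h : Int.fract t = Int.fract (t - ((1 : ℤ) : ℝ)) := (Int.fract_sub_intCast t 1).symm
  rw [h]
  have h2 : t - ((1 : ℤ) : ℝ) = t - 1 := by push_cast; ring
  rw [h2]
  exact Int.fract_eq_self.mpr ⟨by linarith, by linarith⟩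

/-- If `u₂` minimizes and `u_N` maximizes `{kα}` over `1 ≤ k ≤ N-1`, and
`N = u₂ + u_N`, then the points `{0}, {α}, …, {(N-1)α}, 1` partition `[0,1]`
into intervals of exactly two distinct lengths. -/
theorem two_gaps_of_sum (α : ℝ) (hirr : Irrational α)
    (h0 : 0 < α) (h1 : α < 1) (N : ℕ) (hN : 2 ≤ N) (u₂ uN : ℕ)
    (hu₂ : 1 ≤ u₂ ∧ u₂ < N) (huN : 1 ≤ uN ∧ uN < N)
    (hmin : ∀ k, 1 ≤ k → k < N →
      Int.fract ((u₂ : ℝ) * α) ≤ Int.fract ((k : ℝ) * α))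
    (hmax : ∀ k, 1 ≤ k → k < N →
      Int.fract ((k : ℝ) * α) ≤ Int.fract ((uN : ℝ) * α))
    (hsum : N = u₂ + uN) :
    (gaps α N).ncard = 2 := by
  obtain ⟨hu₂1, hu₂N⟩ := hu₂
  obtain ⟨huN1, huNN⟩ := huN
  set δ : ℝ := Int.fract ((u₂ : ℝ) * α) with hδdef
  set Δ : ℝ := Int.fract ((uN : ℝ) * α) with hΔdef
  have hirrk : ∀ k : ℕ, 1 ≤ k → Irrational ((k : ℝ) * α) := fun k hk =>
    hirr.natCast_mul (by omega)
  have hfpos : ∀ k : ℕ, 1 ≤ k → 0 < Int.fract ((k : ℝ) * α) := fun k hk =>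
    Int.fract_pos.mpr ((hirrk k hk).ne_int _)
  have hflt : ∀ k : ℕ, Int.fract ((k : ℝ) * α) < 1 := fun k => Int.fract_lt_one _
  have hfnn : ∀ k : ℕ, 0 ≤ Int.fract ((k : ℝ) * α) := fun k => Int.fract_nonneg _
  have hδpos : 0 < δ := hfpos u₂ hu₂1
  have hΔpos : 0 < Δ := hfpos uN huN1
  have hδlt : δ < 1 := hflt u₂
  have hΔlt : Δ < 1 := hflt uN
  -- distinct fractional parts
  have hdist : ∀ j k : ℕ, j < k → Int.fract ((j : ℝ) * α) ≠ Int.fract ((k : ℝ) * α) := by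
    intro j k hjk heq
    have hh1 : Int.fract ((k : ℝ) * α - (j : ℝ) * α) = 0 := by
      rw [fract_sub_fract', heq, sub_self, Int.fract_zero]
    have hh2 : (k : ℝ) * α - (j : ℝ) * α = ((k - j : ℕ) : ℝ) * α := by
      rw [Nat.cast_sub hjk.le]; ring
    rw [hh2] at hh1
    exact absurd hh1 (ne_of_gt (hfpos (k - j) (by omega)))
  -- membership helpers
  have memP : ∀ k : ℕ, k < N → Int.fract ((k : ℝ) * α) ∈ cfPoints α N := fun k hk =>
    Set.mem_insert_iff.mpr (Or.inr ⟨k, Set.mem_Iio.mpr hk, rfl⟩)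
  have one_mem : (1 : ℝ) ∈ cfPoints α N := Set.mem_insert _ _
  have zero_mem : (0 : ℝ) ∈ cfPoints α N := by
    have := memP 0 (by omega); simpa using this
  have hcases : ∀ x ∈ cfPoints α N, x = 1 ∨ ∃ k : ℕ, k < N ∧ x = Int.fract ((k : ℝ) * α) := by
    intro x hx
    rcases Set.mem_insert_iff.mp hx with h | ⟨k, hk, h⟩
    · exact Or.inl h
    · exact Or.inr ⟨k, Set.mem_Iio.mp hk, h.symm⟩
  have hle1 : ∀ x ∈ cfPoints α N, x ≤ 1 := by
    intro x hx
    rcases hcases x hx with rfl | ⟨k, _, rfl⟩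
    · exact le_rfl
    · exact (hflt k).le
  -- step lemma 1 : for k < uN, {(k+u₂)α} = {kα} + δ
  have hstep1 : ∀ k : ℕ, k < uN →
      Int.fract (((k + u₂ : ℕ) : ℝ) * α) = Int.fract ((k : ℝ) * α) + δ := by
    intro k hk
    have hcast : ((k + u₂ : ℕ) : ℝ) * α = (k : ℝ) * α + (u₂ : ℝ) * α := by
      push_cast; ring
    have hfa : Int.fract (((k + u₂ : ℕ) : ℝ) * α)
        = Int.fract (Int.fract ((k : ℝ) * α) + δ) := by
      rw [hcast, fract_add_fract', ← hδdef]
    rw [hfa]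
    by_cases h : Int.fract ((k : ℝ) * α) + δ < 1
    · exact Int.fract_eq_self.mpr ⟨by linarith [hfnn k, hδpos], h⟩
    · exfalso
      push_neg at h
      have hf1 : Int.fract (Int.fract ((k : ℝ) * α) + δ)
          = Int.fract ((k : ℝ) * α) + δ - 1 :=
        fract_big_aux _ h (by linarith [hflt k, hδlt])
      have hmin' := hmin (k + u₂) (by omega) (by omega)
      rw [hfa, hf1] at hmin'
      linarith [hflt k]
  -- step lemma 2 : for uN < k < N, {(k-uN)α} = {kα} + (1 - Δ)
  have hstep2 : ∀ k : ℕ, uN < k → k < N →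
      Int.fract (((k - uN : ℕ) : ℝ) * α) = Int.fract ((k : ℝ) * α) + (1 - Δ) := by
    intro k hk1 hk2
    have hxΔ : Int.fract ((k : ℝ) * α) < Δ :=
      lt_of_le_of_ne (hmax k (by omega) hk2) (fun h => hdist uN k hk1 h.symm)
    have hcast : ((k - uN : ℕ) : ℝ) * α = (k : ℝ) * α - (uN : ℝ) * α := by
      rw [Nat.cast_sub hk1.le]; ring
    rw [hcast, fract_sub_fract', ← hΔdef]
    have e : Int.fract ((k : ℝ) * α) - Δ
        = (Int.fract ((k : ℝ) * α) + (1 - Δ)) + ((-1 : ℤ) : ℝ) := by push_cast; ring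
    rw [e, Int.fract_add_intCast]
    exact Int.fract_eq_self.mpr ⟨by linarith [hfnn k], by linarith⟩
  -- δ ≠ 1 - Δ
  have hne : δ ≠ 1 - Δ := by
    intro h
    have hNα : (N : ℝ) * α = (u₂ : ℝ) * α + (uN : ℝ) * α := by
      rw [hsum]; push_cast; ring
    have e1 : δ = (u₂ : ℝ) * α - (⌊(u₂ : ℝ) * α⌋ : ℝ) := rfl
    have e2 : Δ = (uN : ℝ) * α - (⌊(uN : ℝ) * α⌋ : ℝ) := rfl
    have : (N : ℝ) * α = ((⌊(u₂ : ℝ) * α⌋ + ⌊(uN : ℝ) * α⌋ + 1 : ℤ) : ℝ) := by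
      push_cast; linarith
    exact (hirrk N (by omega)).ne_int _ this
  -- main: gaps = {δ, 1 - Δ}
  have hkey : gaps α N = {δ, 1 - Δ} := by
    ext d
    simp only [gaps, Set.mem_setOf_eq, Set.mem_insert_iff, Set.mem_singleton_iff]
    constructor
    · rintro ⟨x, hx, y, hy, hxy, hcons, rfl⟩
      rcases hcases x hx with rfl | ⟨k, hkN, rfl⟩
      · exact absurd (hle1 y hy) (not_le.mpr hxy)
      set x := Int.fract ((k : ℝ) * α) with hxdef
      rcases lt_trichotomy k uN with hk | hk | hk
      · -- gap is δ
        left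
        have hz₀ : x + δ ∈ cfPoints α N := by
          have hm := memP (k + u₂) (by omega)
          rwa [hstep1 k hk, ← hxdef] at hm
        have hy2 : y ≤ x + δ := by
          rcases hcons _ hz₀ with h | h
          · linarith
          · exact h
        have hy3 : x + δ ≤ y := by
          by_contra hlt
          push_neg at hlt
          rcases hcases y hy with rfl | ⟨j, hjN, rfl⟩
          · linarith [hflt (k + u₂), hstep1 k hk]
          · set y := Int.fract ((j : ℝ) * α) with hydef
            have hjk : j ≠ k := by
              intro h
              rw [h, ← hxdef] at hydef
              rw [hydef] at hxy
              exact lt_irrefl _ hxy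
            rcases lt_or_gt_of_ne hjk with hjk' | hjk'
            · -- j < k
              have hmuN : k - j < uN := by omega
              have hfm : Int.fract (((k - j : ℕ) : ℝ) * α) = 1 - (y - x) := by
                have hcast : ((k - j : ℕ) : ℝ) * α = (k : ℝ) * α - (j : ℝ) * α := by
                  rw [Nat.cast_sub hjk'.le]; ring
                rw [hcast, fract_sub_fract', ← hydef, ← hxdef]
                have e : x - y = (1 - (y - x)) + ((-1 : ℤ) : ℝ) := by push_cast; ring
                rw [e, Int.fract_add_intCast]
                exact Int.fract_eq_self.mpr ⟨by linarith, by linarith⟩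
              have hs := hstep1 (k - j) hmuN
              rw [hfm] at hs
              linarith [hflt ((k - j) + u₂)]
            · -- j > k
              have hfm : Int.fract (((j - k : ℕ) : ℝ) * α) = y - x := by
                have hcast : ((j - k : ℕ) : ℝ) * α = (j : ℝ) * α - (k : ℝ) * α := by
                  rw [Nat.cast_sub hjk'.le]; ring
                rw [hcast, fract_sub_fract', ← hydef, ← hxdef]
                exact Int.fract_eq_self.mpr ⟨by linarith, by linarith⟩
              have hm := hmin (j - k) (by omega) (by omega)
              rw [hfm] at hm
              linarith
        linarith
      · -- k = uN : gap is 1 - Δ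
        right
        have hxΔ : x = Δ := by rw [hxdef, hΔdef, hk]
        have hy1 : y = 1 := by
          rcases hcases y hy with rfl | ⟨j, hjN, rfl⟩
          · rfl
          · exfalso
            rcases Nat.eq_zero_or_pos j with rfl | hj
            · norm_num at hxy
              linarith [hfnn k]
            · have := hmax j hj hjN
              rw [← hxΔ] at this
              linarith
        rw [hy1, hxΔ]
      · -- k > uN : gap is 1 - Δ
        right
        have hz₁ : x + (1 - Δ) ∈ cfPoints α N := by
          have hm := memP (k - uN) (by omega)
          rwa [hstep2 k hk hkN, ← hxdef] at hm
        have hy2 : y ≤ x + (1 - Δ) := by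
          rcases hcons _ hz₁ with h | h
          · linarith
          · exact h
        have hxΔ : x ≤ Δ := by rw [hxdef]; exact hmax k (by omega) hkN
        have hy3 : x + (1 - Δ) ≤ y := by
          by_contra hlt
          push_neg at hlt
          rcases hcases y hy with rfl | ⟨j, hjN, rfl⟩
          · linarith
          · set y := Int.fract ((j : ℝ) * α) with hydef
            have hjk : j ≠ k := by
              intro h
              rw [h, ← hxdef] at hydef
              rw [hydef] at hxy
              exact lt_irrefl _ hxy
            rcases lt_or_gt_of_ne hjk with hjk' | hjk'
            · -- j < k
              have hfm : Int.fract (((k - j : ℕ) : ℝ) * α) = 1 - (y - x) := by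
                have hcast : ((k - j : ℕ) : ℝ) * α = (k : ℝ) * α - (j : ℝ) * α := by
                  rw [Nat.cast_sub hjk'.le]; ring
                rw [hcast, fract_sub_fract', ← hydef, ← hxdef]
                have e : x - y = (1 - (y - x)) + ((-1 : ℤ) : ℝ) := by push_cast; ring
                rw [e, Int.fract_add_intCast]
                exact Int.fract_eq_self.mpr ⟨by linarith [hΔpos], by linarith⟩
              have hm := hmax (k - j) (by omega) (by omega)
              rw [hfm] at hm
              linarith
            · -- j > k
              have hfm : Int.fract (((j - k : ℕ) : ℝ) * α) = y - x := by
                have hcast : ((j - k : ℕ) : ℝ) * α = (j : ℝ) * α - (k : ℝ) * α := by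
                  rw [Nat.cast_sub hjk'.le]; ring
                rw [hcast, fract_sub_fract', ← hydef, ← hxdef]
                exact Int.fract_eq_self.mpr ⟨by linarith, by linarith [hΔpos]⟩
              have hm2 : j - k + uN < N := by omega
              have hs := hstep2 ((j - k) + uN) (by omega) hm2
              have hsimp : (j - k) + uN - uN = j - k := by omega
              rw [hsimp, hfm] at hs
              linarith [hfnn ((j - k) + uN)]
        linarith
    · intro hd
      rcases hd with rfl | rfl
      · -- δ is a gap : between 0 and δ
        refine ⟨0, zero_mem, δ, memP u₂ hu₂N, hδpos, ?_, (sub_zero δ).symm⟩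
        intro z hz
        rcases hcases z hz with rfl | ⟨j, hjN, rfl⟩
        · exact Or.inr hδlt.le
        · rcases Nat.eq_zero_or_pos j with rfl | hj
          · left; norm_num
          · exact Or.inr (hmin j hj hjN)
      · -- 1 - Δ is a gap : between Δ and 1
        refine ⟨Δ, memP uN huNN, 1, one_mem, hΔlt, ?_, by ring⟩
        intro z hz
        rcases hcases z hz with rfl | ⟨j, hjN, rfl⟩
        · exact Or.inr le_rfl
        · rcases Nat.eq_zero_or_pos j with rfl | hj
          · left
            have hz0 : Int.fract (((0 : ℕ) : ℝ) * α) = 0 := by norm_num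
            rw [hz0]
            exact hΔpos.le
          · exact Or.inl (hmax j hj hjN)
  rw [hkey, Set.ncard_pair hne]
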